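/- arXiv:2307.12140 — 6 statements merged into one kernel-verified Lean document; each statement's English description precedes it below -/
import Mathlib

section
/- In the free group on two generators, the centralizer of the generator a is exactly the cyclic subgroup generated by a; that is, an element w commutes with a if and only if w is an integer power of a. -/
private lemma free_group_of_not_comm {S : Type*} (x y : S) (hxy : x ≠ y) :
    FreeGroup.of x * FreeGroup.of y ≠ FreeGroup.of y * FreeGroup.of x := by
  classical
  intro h
  have := congrArg (FreeGroup.lift
    (fun s => if s = x then Equiv.swap (0 : Fin 3) 1 else Equiv.swap 1 2)) h
  simp only [map_mul, FreeGroup.lift_apply_of, if_pos rfl, if_neg (Ne.symm hxy)] at this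
  revert this; decide

private lemma free_group_mem_zpowers {S : Type*} [Subsingleton S] (x : S)
    (g : FreeGroup S) : g ∈ Subgroup.zpowers (FreeGroup.of x) := by
  induction g with
  | C1 => exact Subgroup.one_mem _
  | of y => rw [Subsingleton.elim y x]; exact Subgroup.mem_zpowers _
  | inv_of y hy => exact Subgroup.inv_mem _ hy
  | mul u v hu hv => exact Subgroup.mul_mem _ hu hv

private lemma free_group_eq_one_of_empty {S : Type*} [IsEmpty S]
    (g : FreeGroup S) : g = 1 := by
  induction g with
  | C1 => rfl
  | of y => exact (IsEmpty.false y).elim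
  | inv_of y hy => rw [hy, inv_one]
  | mul u v hu hv => rw [hu, hv, one_mul]

theorem free_group_centralizer_of_generator (w : FreeGroup (Fin 2)) :
    w * FreeGroup.of 0 = FreeGroup.of 0 * w ↔
      w ∈ Subgroup.zpowers (FreeGroup.of 0 : FreeGroup (Fin 2)) := by
  set a : FreeGroup (Fin 2) := FreeGroup.of 0 with ha
  constructor
  · intro h
    set H : Subgroup (FreeGroup (Fin 2)) := Subgroup.closure {a, w} with hH
    have haH : a ∈ H := Subgroup.subset_closure (by simp)
    have hwH : w ∈ H := Subgroup.subset_closure (by simp)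
    -- every element of H commutes with a and with w
    have hcen : ∀ u ∈ H, Commute a u ∧ Commute w u := by
      intro u hu
      induction hu using Subgroup.closure_induction with
      | mem g hg =>
        rcases hg with hg | hg <;> rw [hg]
        · exact ⟨Commute.refl a, h⟩
        · exact ⟨(show Commute w a from h).symm, Commute.refl w⟩
      | one => exact ⟨Commute.one_right a, Commute.one_right w⟩
      | mul u v _ _ hu hv => exact ⟨hu.1.mul_right hv.1, hu.2.mul_right hv.2⟩
      | inv u _ hu => exact ⟨hu.1.inv_right, hu.2.inv_right⟩
    have hcomm : ∀ u ∈ H, ∀ v ∈ H, Commute u v := by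
      intro u hu v hv
      induction hu using Subgroup.closure_induction with
      | mem g hg =>
        rcases hg with hg | hg <;> rw [hg]
        · exact (hcen v hv).1
        · exact (hcen v hv).2
      | one => exact Commute.one_left v
      | mul s t _ _ hs ht => exact hs.mul_left ht
      | inv s _ hs => exact hs.inv_left
    -- H is a free group (Nielsen–Schreier)
    have e : H ≃* FreeGroup (IsFreeGroup.Generators H) := IsFreeGroup.toFreeGroup H
    have hsub : Subsingleton (IsFreeGroup.Generators H) := by
      constructor
      intro x y
      by_contra hxy
      apply free_group_of_not_comm x y hxy
      have hc : Commute (e.symm (FreeGroup.of x)) (e.symm (FreeGroup.of y)) := by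
        have := hcomm _ (e.symm (FreeGroup.of x)).2 _ (e.symm (FreeGroup.of y)).2
        exact Subtype.ext_iff.mpr this
      have := congrArg e hc
      simpa using this
    -- exponent-sum homomorphism
    set φ : FreeGroup (Fin 2) →* Multiplicative ℤ :=
      FreeGroup.lift (fun i => Multiplicative.ofAdd (if i = 0 then 1 else 0)) with hφ
    have hφa : φ a = Multiplicative.ofAdd 1 := by simp [hφ, ha]
    rcases isEmpty_or_nonempty (IsFreeGroup.Generators H) with hemp | hne
    · exfalso
      haveI := hemp
      have : e ⟨a, haH⟩ = 1 := free_group_eq_one_of_empty _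
      have ha1 : a = 1 := by
        have := congrArg e.symm this
        simp only [MulEquiv.symm_apply_apply, map_one] at this
        exact Subtype.ext_iff.mp this
      exact FreeGroup.of_ne_one (0 : Fin 2) (ha ▸ ha1)
    · obtain ⟨x⟩ := hne
      set g : H := e.symm (FreeGroup.of x) with hg
      have hzp : ∀ u : H, u ∈ Subgroup.zpowers g := by
        intro u
        obtain ⟨m, hm⟩ := free_group_mem_zpowers x (e u)
        refine ⟨m, ?_⟩
        have := congrArg e.symm hm
        simpa [map_zpow] using this
      obtain ⟨m, hm⟩ := hzp ⟨a, haH⟩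
      obtain ⟨n, hn⟩ := hzp ⟨w, hwH⟩
      set c : FreeGroup (Fin 2) := (g : FreeGroup (Fin 2)) with hc
      have hma : c ^ m = a := by
        have := congrArg (Subtype.val) hm
        simpa using this
      have hnw : c ^ n = w := by
        have := congrArg (Subtype.val) hn
        simpa using this
      -- m * (exponent sum of c) = 1, so m = ±1
      have hexp : m * Multiplicative.toAdd (φ c) = 1 := by
        have := congrArg φ hma
        rw [map_zpow, hφa] at this
        have := congrArg Multiplicative.toAdd this
        simpa [toAdd_zpow, smul_eq_mul] using this
      have hmu : m = 1 ∨ m = -1 := Int.isUnit_iff.mp (IsUnit.of_mul_eq_one _ hexp)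
      have hcz : c ∈ Subgroup.zpowers a := by
        rcases hmu with rfl | rfl
        · rw [zpow_one] at hma; rw [hma]; exact Subgroup.mem_zpowers _
        · rw [zpow_neg_one] at hma
          rw [← inv_inv c, hma]
          exact Subgroup.inv_mem _ (Subgroup.mem_zpowers _)
      rw [← hnw]
      exact Subgroup.zpow_mem _ hcz n
  · rintro ⟨n, rfl⟩
    show a ^ n * a = a * a ^ n
    exact (Commute.refl a).zpow_left n
end

section
/- Every surjective group endomorphism of a free group of finite rank is injective (free groups of finite rank are Hopfian). -/
set_option linter.unusedSectionVars false

namespace FGHopf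

variable {α : Type} [DecidableEq α]

section Perm

variable (r : List (α × Bool)) (a : α)

/-- `up r a m` : the `m`-th letter of `r` is `a` (positively). -/
def up (m : ℕ) : Prop := r[m]? = some (a, true)

/-- `dn r a m` : the `m`-th letter of `r` is `a⁻¹`. -/
def dn (m : ℕ) : Prop := r[m]? = some (a, false)

lemma up_lt {m : ℕ} (h : up r a m) : m < r.length := by
  have := List.getElem?_eq_some_iff.mp h
  exact this.1

lemma dn_lt {m : ℕ} (h : dn r a m) : m < r.length := by
  have := List.getElem?_eq_some_iff.mp h
  exact this.1

variable (hr : ∀ (k : ℕ) (x : α) (b : Bool),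
    r[k]? = some (x, b) → r[k + 1]? = some (x, !b) → False)

include hr in
lemma not_up_dn {m : ℕ} (h1 : up r a m) (h2 : dn r a (m + 1)) : False :=
  hr m a true h1 h2

include hr in
lemma not_dn_up {m : ℕ} (h1 : dn r a m) (h2 : up r a (m + 1)) : False :=
  hr m a false h1 h2

lemma not_up_and_dn {m : ℕ} (h1 : up r a m) (h2 : dn r a m) : False := by
  rw [up] at h1; rw [dn] at h2; rw [h1] at h2; simp at h2

/-- Domain of the partial injection associated to generator `a`. -/
def domSet : Set (Fin (r.length + 1)) :=
  {x | up r a x.val ∨ (0 < x.val ∧ dn r a (x.val - 1))}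

/-- Range of the partial injection associated to generator `a`. -/
def ranSet : Set (Fin (r.length + 1)) :=
  {x | dn r a x.val ∨ (0 < x.val ∧ up r a (x.val - 1))}

/-- The partial injection. -/
noncomputable def pInj (x : domSet r a) : ranSet r a := by
  classical
  by_cases h : up r a x.val.val
  · exact ⟨⟨x.val.val + 1, by have := up_lt r a h; omega⟩,
      Or.inr ⟨Nat.succ_pos _, by simpa using h⟩⟩
  · have hx := x.property
    have hd : 0 < x.val.val ∧ dn r a (x.val.val - 1) := by
      rcases hx with h' | h'
      · exact absurd h' h
      · exact h'
    exact ⟨⟨x.val.val - 1, by omega⟩, Or.inl hd.2⟩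

lemma pInj_up {x : domSet r a} (h : up r a x.val.val) :
    (pInj r a x).val.val = x.val.val + 1 := by
  simp only [pInj, dif_pos h]

lemma pInj_dn {x : domSet r a} (h : ¬ up r a x.val.val) :
    (pInj r a x).val.val = x.val.val - 1 := by
  simp only [pInj, dif_neg h]

include hr in
lemma pInj_injective : Function.Injective (pInj r a) := by
  intro x y hxy
  have hv : (pInj r a x).val.val = (pInj r a y).val.val := by rw [hxy]
  have hx := x.property
  have hy := y.property
  by_cases h1 : up r a x.val.val <;> by_cases h2 : up r a y.val.val
  · rw [pInj_up r a h1, pInj_up r a h2] at hv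
    ext; omega
  · have hy' : 0 < y.val.val ∧ dn r a (y.val.val - 1) := by
      rcases hy with h' | h'
      · exact absurd h' h2
      · exact h'
    rw [pInj_up r a h1, pInj_dn r a h2] at hv
    -- x+1 = y-1, so y-1 = x+1, dn at x+1, up at x : contradiction
    exfalso
    have : y.val.val - 1 = x.val.val + 1 := by omega
    exact not_up_dn r a hr h1 (this ▸ hy'.2)
  · have hx' : 0 < x.val.val ∧ dn r a (x.val.val - 1) := by
      rcases hx with h' | h'
      · exact absurd h' h1
      · exact h'
    rw [pInj_dn r a h1, pInj_up r a h2] at hv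
    exfalso
    have : x.val.val - 1 = y.val.val + 1 := by omega
    exact not_up_dn r a hr h2 (this ▸ hx'.2)
  · have hx' : 0 < x.val.val ∧ dn r a (x.val.val - 1) := by
      rcases hx with h' | h'
      · exact absurd h' h1
      · exact h'
    have hy' : 0 < y.val.val ∧ dn r a (y.val.val - 1) := by
      rcases hy with h' | h'
      · exact absurd h' h2
      · exact h'
    rw [pInj_dn r a h1, pInj_dn r a h2] at hv
    ext; omega

include hr in
lemma pInj_surjective : Function.Surjective (pInj r a) := by
  rintro ⟨y, hy⟩
  by_cases h : dn r a y.val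
  · -- preimage is y + 1
    have hlt : y.val < r.length := dn_lt r a h
    refine ⟨⟨⟨y.val + 1, by omega⟩, Or.inr ⟨Nat.succ_pos _, by simpa using h⟩⟩, ?_⟩
    have hnu : ¬ up r a (y.val + 1) := fun hu => not_dn_up r a hr h hu
    apply Subtype.ext
    apply Fin.ext
    rw [pInj_dn r a (by simpa using hnu)]
    simp
  · have hy' : 0 < y.val ∧ up r a (y.val - 1) := by
      rcases hy with h' | h'
      · exact absurd h' h
      · exact h'
    refine ⟨⟨⟨y.val - 1, by omega⟩, Or.inl hy'.2⟩, ?_⟩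
    apply Subtype.ext
    apply Fin.ext
    rw [pInj_up r a (by simpa using hy'.2)]
    simp; omega

/-- The bijection between domain and range. -/
noncomputable def pEquiv : domSet r a ≃ ranSet r a :=
  Equiv.ofBijective (pInj r a) ⟨pInj_injective r a hr, pInj_surjective r a hr⟩

open Classical in
/-- The permutation associated to generator `a`. -/
noncomputable def perm : Equiv.Perm (Fin (r.length + 1)) :=
  (Equiv.sumCompl (· ∈ domSet r a)).symm.trans
    ((Equiv.sumCongr (pEquiv r a hr)
      (Fintype.equivOfCardEq (by
        have h1 : Fintype.card {x // x ∈ domSet r a} = Fintype.card {x // x ∈ ranSet r a} :=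
          Fintype.card_congr (pEquiv r a hr)
        rw [Fintype.card_subtype_compl, Fintype.card_subtype_compl, h1]))).trans
      (Equiv.sumCompl (· ∈ ranSet r a)))

open Classical in
lemma perm_apply_mem {x : Fin (r.length + 1)} (hx : x ∈ domSet r a) :
    perm r a hr x = (pEquiv r a hr ⟨x, hx⟩).val := by
  simp only [perm, Equiv.trans_apply]
  rw [Equiv.sumCompl_symm_apply_of_pos hx]
  simp

include hr in
lemma perm_up {m : ℕ} (h : up r a m) (hm : m < r.length + 1) (hm1 : m + 1 < r.length + 1) :
    perm r a hr ⟨m, hm⟩ = ⟨m + 1, hm1⟩ := by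
  have hx : (⟨m, hm⟩ : Fin (r.length + 1)) ∈ domSet r a := Or.inl h
  rw [perm_apply_mem r a hr hx]
  apply Fin.ext
  have := pInj_up r a (x := ⟨⟨m, hm⟩, hx⟩) h
  simpa [pEquiv, Equiv.ofBijective] using this

include hr in
lemma perm_dn {m : ℕ} (h : dn r a m) (hm : m + 1 < r.length + 1) (hm' : m < r.length + 1) :
    perm r a hr ⟨m + 1, hm⟩ = ⟨m, hm'⟩ := by
  have hx : (⟨m + 1, hm⟩ : Fin (r.length + 1)) ∈ domSet r a :=
    Or.inr ⟨Nat.succ_pos _, by simpa using h⟩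
  rw [perm_apply_mem r a hr hx]
  apply Fin.ext
  have hnu : ¬ up r a (m + 1) := fun hu => not_dn_up r a hr h hu
  have := pInj_dn r a (x := ⟨⟨m + 1, hm⟩, hx⟩) (by simpa using hnu)
  simpa [pEquiv, Equiv.ofBijective] using this

end Perm

section RF

theorem exists_hom {n : ℕ} (w : FreeGroup (Fin n)) (hw : w ≠ 1) :
    ∃ (G : Type) (_ : Group G) (_ : Finite G) (f : FreeGroup (Fin n) →* G), f w ≠ 1 := by
  set l := w.toWord with hl
  set r := l.reverse with hrd
  have hLr : r.length = l.length := by simp [hrd]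
  have hred : FreeGroup.reduce l = l := FreeGroup.reduce_toWord w
  have hnil : l ≠ [] := fun h => hw (FreeGroup.toWord_eq_nil_iff.mp h)
  have hr : ∀ (k : ℕ) (x : Fin n) (b : Bool),
      r[k]? = some (x, b) → r[k + 1]? = some (x, !b) → False := by
    intro k x b h1 h2
    have hk1 : k < r.length := (List.getElem?_eq_some_iff.mp h1).1
    have hk2 : k + 1 < r.length := (List.getElem?_eq_some_iff.mp h2).1
    set j : ℕ := l.length - 2 - k with hj
    have hj1 : j < l.length := by omega
    have hj2 : j + 1 < l.length := by omega
    have hgj : l[j]? = some (x, !b) := by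
      rw [hrd] at h2
      rw [List.getElem?_reverse (by omega)] at h2
      rw [show j = l.length - 1 - (k + 1) by omega]
      exact h2
    have hgj1 : l[j + 1]? = some (x, !(!b)) := by
      rw [hrd] at h1
      rw [List.getElem?_reverse (by omega)] at h1
      rw [show j + 1 = l.length - 1 - k by omega, Bool.not_not]
      exact h1
    obtain ⟨hj1', hej⟩ := List.getElem?_eq_some_iff.mp hgj
    obtain ⟨hj2', hej1⟩ := List.getElem?_eq_some_iff.mp hgj1
    have hdec : l = l.take j ++ (x, !b) :: (x, !(!b)) :: l.drop (j + 2) := by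
      conv_lhs => rw [← List.take_append_drop j l]
      congr 1
      rw [List.drop_eq_getElem_cons hj1, hej, List.drop_eq_getElem_cons hj2, hej1]
    exact FreeGroup.reduce.not (hred.trans hdec)
  set G := Equiv.Perm (Fin (r.length + 1)) with hG
  set g : Fin n → G := fun a => perm r a hr with hg
  set f : FreeGroup (Fin n) →* G := FreeGroup.lift g with hf
  refine ⟨G, inferInstance, inferInstance, f, ?_⟩
  have key : ∀ k (hk : k ≤ l.length),
      ((l.drop (l.length - k)).map (fun x => cond x.2 (g x.1) (g x.1)⁻¹)).prod
        ⟨0, by omega⟩ = ⟨k, by omega⟩ := by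
    intro k
    induction k with
    | zero =>
      intro hk
      rw [Nat.sub_zero, List.drop_length]
      rfl
    | succ k ih =>
      intro hk
      have hk' : k ≤ l.length := by omega
      have harith : l.length - (k + 1) + 1 = l.length - k := by omega
      have hm : l.length - (k + 1) < l.length := by omega
      have hdrop : l.drop (l.length - (k + 1)) =
          (l[l.length - (k + 1)]'hm) :: l.drop (l.length - k) := by
        rw [List.drop_eq_getElem_cons hm, harith]
      rw [hdrop, List.map_cons, List.prod_cons, Equiv.Perm.mul_apply, ih hk']
      have hkr : k < r.length := by omega
      set c := l[l.length - (k + 1)]'hm with hcd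
      have hrc : r[k]? = some c := by
        rw [hrd, List.getElem?_reverse (by omega),
          show l.length - 1 - k = l.length - (k + 1) by omega]
        exact List.getElem?_eq_getElem hm
      cases hb : c.2 with
      | true =>
        have hup : up r c.1 k := by
          rw [up, hrc]
          rw [← hb]
        exact perm_up r c.1 hr hup (by omega) (by omega)
      | false =>
        have hdn : dn r c.1 k := by
          rw [dn, hrc]
          rw [← hb]
        have hp := perm_dn r c.1 hr hdn (by omega) (by omega)
        show (perm r c.1 hr)⁻¹ _ = _
        rw [← hp, Equiv.Perm.inv_def, Equiv.symm_apply_apply]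
  intro h1
  have hL0 : l.length ≠ 0 := by simpa using hnil
  have hkey := key l.length le_rfl
  rw [Nat.sub_self, List.drop_zero] at hkey
  have hfw : f w ⟨0, by omega⟩ = ⟨l.length, by omega⟩ := by
    conv_lhs => rw [hf, show FreeGroup.lift g w = FreeGroup.lift g (FreeGroup.mk l) from by rw [hl, FreeGroup.mk_toWord]]
    rw [FreeGroup.lift_mk]
    exact hkey
  rw [h1, Equiv.Perm.one_apply] at hfw
  exact hL0 (congrArg Fin.val hfw).symm

end RF

end FGHopf

theorem free_group_hopfian (n : ℕ) (φ : FreeGroup (Fin n) →* FreeGroup (Fin n))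
    (hφ : Function.Surjective φ) : Function.Injective φ := by
  rw [injective_iff_map_eq_one]
  intro w hw1
  by_contra hw
  obtain ⟨G, _, _, f, hf⟩ := FGHopf.exists_hom w hw
  have : Finite (FreeGroup (Fin n) →* G) := Finite.of_equiv _ FreeGroup.lift
  have hinj : Function.Injective (fun g : FreeGroup (Fin n) →* G => g.comp φ) := by
    intro g₁ g₂ h
    exact (MonoidHom.cancel_right hφ).mp h
  obtain ⟨g, hg⟩ := Finite.injective_iff_surjective.mp hinj f
  apply hf
  have hg' : g.comp φ = f := hg
  rw [← hg', MonoidHom.comp_apply, hw1, map_one]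
end

section
/- If N is a normal subgroup of the free group F₂ of rank 2 such that the quotient F₂/N is isomorphic to F₂, then N is the trivial subgroup. -/
/-!
A surjective endomorphism `f` of a finitely generated residually finite group `G` is injective
(Mal'cev): if `f g = 1` with `g ≠ 1`, pick a finite quotient `ψ : G → Q` with `ψ g ≠ 1`. Since `G`
is finitely generated, `Hom(G, Q)` is finite, so precomposition with `f`, being injective, is
onto; hence `ψ = χ ∘ f` kills `g`, a contradiction.

Free groups are residually finite: for a reduced word `L` of length `n`, read the `i`-th letter
`(a, b)` as an edge labelled `a` between positions `i` and `i + 1` of `{0, …, n}`, oriented by `b`.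
Reducedness says exactly that the edges labelled `a` form a partial injection, which extends to a
permutation `σ a`; then `lift σ (mk L)` walks from `n` back to `0`, so it is not `1` when `n > 0`.
-/

open Function Equiv

instance MonoidHom.finite_of_fg {G H : Type*} [Group G] [Group H] [Group.FG G] [Finite H] :
    Finite (G →* H) := by
  obtain ⟨S, hS, hSfin⟩ := Group.fg_iff.mp ‹Group.FG G›
  have : Finite S := hSfin
  exact .of_injective (fun χ : G →* H => S.domRestrict χ) fun χ ψ h =>
    MonoidHom.eq_of_eqOn_dense hS fun s hs => congrFun h ⟨s, hs⟩

theorem Group.ResiduallyFinite.injective_of_surjective {G : Type*} [Group G] [Group.FG G]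
    [Group.ResiduallyFinite G] {f : G →* G} (hf : Surjective f) : Injective f := by
  refine (injective_iff_map_eq_one f).mpr fun g hg => ?_
  by_contra hg1
  obtain ⟨H, hgH⟩ := Group.exists_finiteIndexNormalSubgroup_notMem g hg1
  have hcomp : Injective fun χ : G →* G ⧸ H.toSubgroup => χ.comp f :=
    fun _ _ h => (MonoidHom.cancel_right hf).mp h
  obtain ⟨χ, hχ⟩ := Finite.injective_iff_surjective.mp hcomp (QuotientGroup.mk' H.toSubgroup)
  apply hgH
  rw [← FiniteIndexNormalSubgroup.mem_toSubgroup_iff, ← QuotientGroup.eq_one_iff,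
    ← QuotientGroup.mk'_apply, ← hχ, MonoidHom.comp_apply, hg, map_one]

theorem List.prod_ofFn_smul_last {M X : Type*} [Monoid M] [MulAction M X] {m : ℕ}
    (g : Fin m → M) (x : Fin (m + 1) → X) (hg : ∀ i, g i • x i.succ = x i.castSucc) :
    (List.ofFn g).prod • x (Fin.last m) = x 0 := by
  induction m with
  | zero => simp
  | succ m ih =>
    have htail := ih (fun i => g i.succ) (fun i => x i.succ) fun i => hg i.succ
    rw [List.ofFn_succ, List.prod_cons, mul_smul, ← Fin.succ_last, htail]
    exact hg 0

namespace FreeGroup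

variable {α : Type*}

theorem IsReduced.exists_perm_step {L : List (α × Bool)} (hL : IsReduced L) (a : α) :
    ∃ σ : Perm (Fin (L.length + 1)), ∀ i : Fin L.length, L[i].1 = a →
      cond L[i].2 σ σ⁻¹ i.succ = i.castSucc := by
  have hadj : ∀ i j : Fin L.length, L[i].1 = L[j].1 → L[i].2 ≠ L[j].2 → (i : ℕ) + 1 ≠ j := by
    rintro ⟨i, hi⟩ ⟨j, hj⟩ h1 h2 (rfl : i + 1 = j)
    exact h2 (hL.getElem i hj h1)
  -- the `i`-th letter is an edge from `endpoint false i` to `endpoint true i`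
  let endpoint (c : Bool) (i : {i : Fin L.length // L[i].1 = a}) : Fin (L.length + 1) :=
    cond (L[i.1].2 ^^ c) i.1.succ i.1.castSucc
  have hendpoint (c : Bool) : Injective (endpoint c) := by
    rintro ⟨i, hi⟩ ⟨j, hj⟩ h
    have hij := hadj i j (hi.trans hj.symm)
    have hji := hadj j i (hj.trans hi.symm)
    cases c <;> cases hbi : L[(i : ℕ)].2 <;> cases hbj : L[(j : ℕ)].2 <;>
      simp only [endpoint, Fin.getElem_fin, hbi, hbj, Bool.xor_false, Bool.xor_true, Bool.not_true,
        Bool.not_false, cond_true, cond_false, Subtype.mk.injEq, Fin.ext_iff, Fin.val_succ,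
        Fin.val_castSucc, ne_eq, not_true, not_false_eq_true, Bool.true_eq_false,
        Bool.false_eq_true, forall_const] at h hij hji ⊢ <;> omega
  obtain ⟨σ, hσ⟩ :=
    Perm.exists_extending_pair (endpoint false) (endpoint true) (hendpoint false) (hendpoint true)
  refine ⟨σ, fun i hi => ?_⟩
  have hstep := hσ ⟨i, hi⟩
  cases hb : L[(i : ℕ)].2 <;>
    simp only [endpoint, Fin.getElem_fin, hb, Bool.xor_false, Bool.xor_true, Bool.not_true,
      Bool.not_false, cond_true, cond_false] at hstep ⊢
  · exact σ.symm_apply_eq.mpr hstep.symm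
  · exact hstep

instance : Group.ResiduallyFinite (FreeGroup α) := by
  classical
  refine Group.residuallyFinite_of_forall_exists_finite_monoidHom.{_, 0} fun w hw => ?_
  obtain ⟨L, hL, rfl⟩ : ∃ L, IsReduced L ∧ mk L = w := ⟨_, isReduced_toWord, mk_toWord⟩
  choose σ hσ using hL.exists_perm_step
  refine ⟨Perm (Fin (L.length + 1)), inferInstance, inferInstance, lift σ, fun h => hw ?_⟩
  have hlift : lift σ (mk L) =
      (List.ofFn fun i : Fin L.length => cond L[i].2 (σ L[i].1) (σ L[i].1)⁻¹).prod := by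
    rw [lift_mk, ← List.ofFn_getElem_eq_map]
    rfl
  have hpath := List.prod_ofFn_smul_last _ id fun i => (Perm.smul_def _ _).trans (hσ _ i rfl)
  rw [← hlift, h, one_smul] at hpath
  have hlen : L.length = 0 := by simpa [Fin.ext_iff] using hpath
  rw [List.length_eq_zero_iff.mp hlen]
  rfl

end FreeGroup

theorem free_group_quotient_iso_self_implies_trivial
    (N : Subgroup (FreeGroup (Fin 2))) [N.Normal]
    (h : Nonempty ((FreeGroup (Fin 2) ⧸ N) ≃* FreeGroup (Fin 2))) :
    N = ⊥ := by
  obtain ⟨e⟩ := h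
  let φ := e.toMonoidHom.comp (QuotientGroup.mk' N)
  have hφ : Injective φ := Group.ResiduallyFinite.injective_of_surjective
    (e.surjective.comp (QuotientGroup.mk'_surjective N))
  calc N = (QuotientGroup.mk' N).ker := (QuotientGroup.ker_mk' N).symm
    _ = φ.ker := (MonoidHom.ker_mulEquiv_comp _ e).symm
    _ = ⊥ := (MonoidHom.ker_eq_bot_iff φ).mpr hφ
end

section
/- Let F₂ be the free group on generators a, b, let w₁,…,wₘ and W₁,…,Wₙ be elements of F₂, and let N be the normal closure of the set of commutators {[wᵢ, a] : 1 ≤ i ≤ m} ∪ {[Wⱼ, b] : 1 ≤ j ≤ n}. If the quotient F₂/N is isomorphic to the free group of rank 2, then every wᵢ lies in the cyclic subgroup generated by a and every Wⱼ lies in the cyclic subgroup generated by b. -/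
open List

set_option linter.unusedSectionVars false
namespace RFAux

variable {α : Type} [DecidableEq α]

/-- The "no cancellation" relation between adjacent letters of a reduced word. -/
abbrev Rel : (α × Bool) → (α × Bool) → Prop := fun p q => ¬(p.1 = q.1 ∧ p.2 = !q.2)

theorem chain'_of_not_infix : ∀ (L : List (α × Bool)),
    (∀ (L₂ L₃ : List (α × Bool)) (x : α) (b : Bool), L ≠ L₂ ++ (x, b) :: (x, !b) :: L₃) →
    List.Chain' (Rel (α := α)) L
  | [], _ => List.isChain_nil
  | [_], _ => List.isChain_singleton _
  | p :: q :: t, h => by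
    refine List.isChain_cons_cons.mpr ⟨?_, chain'_of_not_infix (q :: t) ?_⟩
    · rintro ⟨h1, h2⟩
      have hq : q = (p.1, !p.2) := by
        obtain ⟨qa, qb⟩ := q
        simp only at h1 h2
        simp [← h1, h2]
      exact h [] t p.1 p.2 (by simp [← hq])
    · intro L₂ L₃ x b hE
      exact h (p :: L₂) L₃ x b (by rw [List.cons_append, hE])

theorem chain'_toWord (v : FreeGroup α) : List.Chain' Rel v.toWord :=
  chain'_of_not_infix _ fun _ _ _ _ hE =>
    FreeGroup.reduce.not (p := False) (L₁ := v.toWord)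
      (by rw [FreeGroup.reduce_toWord]; exact hE)

theorem reduce_of_chain' : ∀ (L : List (α × Bool)), List.Chain' Rel L → FreeGroup.reduce L = L
  | [], _ => rfl
  | [p], _ => FreeGroup.reduce_singleton p
  | p :: q :: t, h => by
    have h1 := List.isChain_cons_cons.mp h
    have ih := reduce_of_chain' (q :: t) h1.2
    rw [FreeGroup.reduce.cons, ih]
    show (if p.1 = q.1 ∧ p.2 = !q.2 then t else p :: q :: t) = p :: q :: t
    rw [if_neg h1.1]

theorem toWord_mk_of_chain' {L : List (α × Bool)} (h : List.Chain' Rel L) :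
    (FreeGroup.mk L).toWord = L := by rw [FreeGroup.toWord_mk, reduce_of_chain' L h]


variable (L : List (α × Bool)) (x : α)

def P1 (j : ℕ) : Prop := ∃ i : Fin L.length, L.get i = (x, true) ∧ j = (i : ℕ) + 1
def P2 (j : ℕ) : Prop := ∃ i : Fin L.length, L.get i = (x, false) ∧ j = (i : ℕ)
def Q1 (j : ℕ) : Prop := ∃ i : Fin L.length, L.get i = (x, true) ∧ j = (i : ℕ)
def Q2 (j : ℕ) : Prop := ∃ i : Fin L.length, L.get i = (x, false) ∧ j = (i : ℕ) + 1

instance (j : ℕ) : Decidable (P1 L x j) := by unfold P1; infer_instance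
instance (j : ℕ) : Decidable (P2 L x j) := by unfold P2; infer_instance
instance (j : ℕ) : Decidable (Q1 L x j) := by unfold Q1; infer_instance
instance (j : ℕ) : Decidable (Q2 L x j) := by unfold Q2; infer_instance

def fwd (j : ℕ) : ℕ := if P1 L x j then j - 1 else if P2 L x j then j + 1 else j
def bwd (j : ℕ) : ℕ := if Q1 L x j then j + 1 else if Q2 L x j then j - 1 else j

theorem not_adj (hL : List.Chain' Rel L) {i k : Fin L.length} (hik : (k : ℕ) = (i : ℕ) + 1)
    {c : Bool} (h1 : L.get i = (x, c)) (h2 : L.get k = (x, !c)) : False := by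
  have hlt : (i : ℕ) < L.length - 1 := by have := k.isLt; omega
  have hr : Rel (L.get ⟨(i : ℕ), by omega⟩) (L.get ⟨(i : ℕ) + 1, by omega⟩) :=
    List.isChain_iff_getElem.mp hL i (by omega)
  have e1 : (⟨(i : ℕ), by omega⟩ : Fin L.length) = i := rfl
  have e2 : (⟨(i : ℕ) + 1, by omega⟩ : Fin L.length) = k := Fin.ext hik.symm
  rw [e1, e2, h1, h2] at hr
  exact hr ⟨rfl, by simp⟩

theorem not_P1_of_P2 (hL : List.Chain' Rel L) {j : ℕ} (h2 : P2 L x j) : ¬ P1 L x j := by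
  rintro ⟨i, hi, rfl⟩
  obtain ⟨i', hi', hj'⟩ := h2
  exact not_adj L x hL (i := i) (k := i') (by omega) hi (by simpa using hi')

theorem not_Q1_of_Q2 (hL : List.Chain' Rel L) {j : ℕ} (h2 : Q2 L x j) : ¬ Q1 L x j := by
  rintro ⟨i, hi, rfl⟩
  obtain ⟨i', hi', hj'⟩ := h2
  exact not_adj L x hL (i := i') (k := i) (by omega) hi' (by simpa using hi)

theorem fwd_lt {j : ℕ} (hj : j < L.length + 1) : fwd L x j < L.length + 1 := by
  unfold fwd; split_ifs with h1 h2
  · omega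
  · obtain ⟨i, _, rfl⟩ := h2; have := i.isLt; omega
  · omega

theorem bwd_lt {j : ℕ} (hj : j < L.length + 1) : bwd L x j < L.length + 1 := by
  unfold bwd; split_ifs with h1 h2
  · obtain ⟨i, _, rfl⟩ := h1; have := i.isLt; omega
  · omega
  · omega

theorem tgt_fwd (hL : List.Chain' Rel L) {j : ℕ} (h : P1 L x j ∨ P2 L x j) :
    Q1 L x (fwd L x j) ∨ Q2 L x (fwd L x j) := by
  unfold fwd
  rcases h with h | h
  · rw [if_pos h]; obtain ⟨i, hi, rfl⟩ := h; exact Or.inl ⟨i, hi, by omega⟩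
  · rw [if_neg (not_P1_of_P2 L x hL h), if_pos h]
    obtain ⟨i, hi, rfl⟩ := h; exact Or.inr ⟨i, hi, rfl⟩

theorem bwd_fwd (hL : List.Chain' Rel L) {j : ℕ} (h : P1 L x j ∨ P2 L x j) : bwd L x (fwd L x j) = j := by
  unfold fwd bwd
  rcases h with h | h
  · rw [if_pos h]; obtain ⟨i, hi, rfl⟩ := h
    rw [if_pos (show Q1 L x ((i : ℕ) + 1 - 1) from ⟨i, hi, by omega⟩)]
    omega
  · rw [if_neg (not_P1_of_P2 L x hL h), if_pos h]
    obtain ⟨i, hi, rfl⟩ := h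
    have hq2 : Q2 L x ((i : ℕ) + 1) := ⟨i, hi, rfl⟩
    rw [if_neg (not_Q1_of_Q2 L x hL hq2), if_pos hq2]
    omega

theorem src_bwd (hL : List.Chain' Rel L) {j : ℕ} (h : Q1 L x j ∨ Q2 L x j) :
    P1 L x (bwd L x j) ∨ P2 L x (bwd L x j) := by
  unfold bwd
  rcases h with h | h
  · rw [if_pos h]; obtain ⟨i, hi, rfl⟩ := h; exact Or.inl ⟨i, hi, rfl⟩
  · rw [if_neg (not_Q1_of_Q2 L x hL h), if_pos h]
    obtain ⟨i, hi, rfl⟩ := h; exact Or.inr ⟨i, hi, by omega⟩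

theorem fwd_bwd (hL : List.Chain' Rel L) {j : ℕ} (h : Q1 L x j ∨ Q2 L x j) : fwd L x (bwd L x j) = j := by
  unfold fwd bwd
  rcases h with h | h
  · rw [if_pos h]; obtain ⟨i, hi, rfl⟩ := h
    rw [if_pos (show P1 L x ((i : ℕ) + 1) from ⟨i, hi, rfl⟩)]
    omega
  · rw [if_neg (not_Q1_of_Q2 L x hL h), if_pos h]
    obtain ⟨i, hi, rfl⟩ := h
    have hp2 : P2 L x (i : ℕ) := ⟨i, hi, by omega⟩
    rw [Nat.add_sub_cancel, if_neg (not_P1_of_P2 L x hL hp2), if_pos hp2]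

/-- The permutation of `Fin (L.length + 1)` associated to the letter `x`. -/
noncomputable def permx (hL : List.Chain' Rel L) : Equiv.Perm (Fin (L.length + 1)) :=
  Equiv.extendSubtype
    (p := fun j : Fin (L.length + 1) => P1 L x (j : ℕ) ∨ P2 L x (j : ℕ))
    (q := fun j : Fin (L.length + 1) => Q1 L x (j : ℕ) ∨ Q2 L x (j : ℕ))
    { toFun := fun j => ⟨⟨fwd L x j, fwd_lt L x j.1.isLt⟩, tgt_fwd L x hL j.2⟩
      invFun := fun j => ⟨⟨bwd L x j, bwd_lt L x j.1.isLt⟩, src_bwd L x hL j.2⟩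
      left_inv := fun j => Subtype.ext (Fin.ext (bwd_fwd L x hL j.2))
      right_inv := fun j => Subtype.ext (Fin.ext (fwd_bwd L x hL j.2)) }

theorem permx_apply_true (hL : List.Chain' Rel L) {i : Fin L.length} (h : L.get i = (x, true)) :
    permx L x hL ⟨(i : ℕ) + 1, by omega⟩ = ⟨(i : ℕ), by omega⟩ := by
  have hp : P1 L x ((i : ℕ) + 1) ∨ P2 L x ((i : ℕ) + 1) := Or.inl ⟨i, h, rfl⟩
  rw [permx, Equiv.extendSubtype_apply_of_mem
    (p := fun j : Fin (L.length + 1) => P1 L x (j : ℕ) ∨ P2 L x (j : ℕ))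
    (q := fun j : Fin (L.length + 1) => Q1 L x (j : ℕ) ∨ Q2 L x (j : ℕ)) _ _ hp]
  apply Fin.ext
  show fwd L x ((i : ℕ) + 1) = (i : ℕ)
  unfold fwd
  rw [if_pos (show P1 L x ((i : ℕ) + 1) from ⟨i, h, rfl⟩)]
  omega

theorem permx_apply_false (hL : List.Chain' Rel L) {i : Fin L.length} (h : L.get i = (x, false)) :
    permx L x hL ⟨(i : ℕ), by omega⟩ = ⟨(i : ℕ) + 1, by omega⟩ := by
  have hp2 : P2 L x (i : ℕ) := ⟨i, h, rfl⟩
  rw [permx, Equiv.extendSubtype_apply_of_mem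
    (p := fun j : Fin (L.length + 1) => P1 L x (j : ℕ) ∨ P2 L x (j : ℕ))
    (q := fun j : Fin (L.length + 1) => Q1 L x (j : ℕ) ∨ Q2 L x (j : ℕ)) _ _ (Or.inr hp2)]
  apply Fin.ext
  show fwd L x (i : ℕ) = (i : ℕ) + 1
  unfold fwd
  rw [if_neg (not_P1_of_P2 L x hL hp2), if_pos hp2]



theorem eval (L : List (α × Bool)) (hL : List.Chain' Rel L) :
    ∀ (d k : ℕ) (hkd : k + d = L.length),
      (List.prod ((L.drop k).map fun p =>
          cond p.2 (permx L p.1 hL) (permx L p.1 hL)⁻¹))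
        ⟨L.length, by omega⟩ = ⟨k, by omega⟩ := by
  intro d
  induction d with
  | zero =>
    intro k hk
    have hkl : k = L.length := by omega
    subst hkl
    rw [List.drop_length]
    simp
  | succ d ih =>
    intro k hk
    have hklt : k < L.length := by omega
    rw [List.drop_eq_getElem_cons hklt, List.map_cons, List.prod_cons,
      Equiv.Perm.mul_apply, ih (k + 1) (by omega)]
    rcases hyc : L[k]'hklt with ⟨y, c⟩
    have hget : L.get ⟨k, hklt⟩ = (y, c) := by rw [List.get_eq_getElem]; exact hyc
    cases c
    · show (permx L y hL)⁻¹ ⟨k + 1, _⟩ = ⟨k, _⟩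
      have := permx_apply_false L y hL (i := ⟨k, hklt⟩) hget
      rw [← this]; exact Equiv.symm_apply_apply _ _
    · show permx L y hL ⟨k + 1, _⟩ = ⟨k, _⟩
      exact permx_apply_true L y hL (i := ⟨k, hklt⟩) hget

theorem exists_perm_rep (g : FreeGroup α) (hg : g ≠ 1) :
    ∃ (k : ℕ) (f : FreeGroup α →* Equiv.Perm (Fin k)), f g ≠ 1 := by
  have hL : List.Chain' Rel g.toWord := chain'_toWord g
  refine ⟨g.toWord.length + 1, FreeGroup.lift (fun y => permx g.toWord y hL), fun hone => ?_⟩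
  have h0 := eval g.toWord hL g.toWord.length 0 (by omega)
  have hlm : FreeGroup.lift (fun y => permx g.toWord y hL) g
      = List.prod (g.toWord.map fun p =>
          cond p.2 (permx g.toWord p.1 hL) (permx g.toWord p.1 hL)⁻¹) := by
    have h2 := FreeGroup.lift_mk (β := Equiv.Perm (Fin (g.toWord.length + 1)))
      (f := fun y => permx g.toWord y hL) (L := g.toWord)
    rwa [FreeGroup.mk_toWord] at h2
  rw [hone] at hlm
  rw [List.drop_zero, ← hlm] at h0
  simp only [Equiv.Perm.coe_one, id_eq, Fin.mk.injEq] at h0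
  exact hg (FreeGroup.toWord_eq_nil_iff.mp (List.length_eq_zero_iff.mp h0))

theorem eq_one_of_surjective_map_eq_one
    (φ : FreeGroup (Fin 2) →* FreeGroup (Fin 2)) (hφ : Function.Surjective φ)
    {g : FreeGroup (Fin 2)} (hg : φ g = 1) : g = 1 := by
  by_contra hne
  obtain ⟨k, f, hf⟩ := exists_perm_rep g hne
  have : Finite (FreeGroup (Fin 2) →* Equiv.Perm (Fin k)) :=
    Finite.of_equiv _ FreeGroup.lift
  have hinj : Function.Injective
      (fun ψ : FreeGroup (Fin 2) →* Equiv.Perm (Fin k) => ψ.comp φ) :=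
    fun ψ1 ψ2 hh => (MonoidHom.cancel_right hφ).mp hh
  obtain ⟨χ, hχ⟩ := Finite.injective_iff_surjective.mp hinj f
  have hgg := congrArg (fun F : FreeGroup (Fin 2) →* Equiv.Perm (Fin k) => F g) hχ
  simp only [MonoidHom.comp_apply] at hgg
  rw [hg, map_one] at hgg
  exact hf hgg.symm

theorem mem_zpowers_of_commute (x : α) :
    ∀ (N : ℕ) (v : FreeGroup α), v.toWord.length = N →
      v * FreeGroup.of x = FreeGroup.of x * v →
      v ∈ Subgroup.zpowers (FreeGroup.of x) := by
  intro N
  induction N using Nat.strong_induction_on with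
  | _ N ih =>
  intro v hlen hc
  rcases hv : v.toWord with _ | ⟨⟨y, c⟩, t⟩
  · have hv1 : v = 1 := FreeGroup.toWord_eq_nil_iff.mp hv
    rw [hv1]; exact Subgroup.one_mem _
  · have hch : List.Chain' Rel v.toWord := chain'_toWord v
    have hofmk : FreeGroup.of x = FreeGroup.mk [(x, true)] := rfl
    have hinvmk : (FreeGroup.of x)⁻¹ = FreeGroup.mk [(x, false)] := by
      rw [hofmk, FreeGroup.inv_mk]; rfl
    by_cases hyx : y = x
    · subst hyx
      have hsplit : v = FreeGroup.mk [(y, c)] * FreeGroup.mk t := by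
        rw [FreeGroup.mul_mk, List.singleton_append, ← hv, FreeGroup.mk_toWord]
      have hcht : List.Chain' Rel t := by
        rw [hv] at hch; exact hch.tail
      have ht : (FreeGroup.mk t).toWord = t := toWord_mk_of_chain' hcht
      have he1 : FreeGroup.mk [(y, c)] ∈ Subgroup.zpowers (FreeGroup.of y) := by
        cases c
        · rw [← hinvmk]; exact Subgroup.inv_mem _ (Subgroup.mem_zpowers _)
        · rw [← hofmk]; exact Subgroup.mem_zpowers _
      have he2 : FreeGroup.mk [(y, c)] * FreeGroup.of y
          = FreeGroup.of y * FreeGroup.mk [(y, c)] := by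
        cases c
        · rw [← hinvmk]; group
        · rw [← hofmk]
      have hu : FreeGroup.mk t * FreeGroup.of y = FreeGroup.of y * FreeGroup.mk t := by
        apply mul_left_cancel (a := FreeGroup.mk [(y, c)])
        rw [← mul_assoc, ← hsplit, hc, hsplit, ← mul_assoc, ← he2, mul_assoc]
      have hlt : t.length < N := by
        rw [hv] at hlen; simp only [List.length_cons] at hlen; omega
      have hmem := ih t.length hlt (FreeGroup.mk t) (by rw [ht]) hu
      rw [hsplit]
      exact Subgroup.mul_mem _ he1 hmem
    · exfalso
      have hvne : v.toWord ≠ [] := by rw [hv]; simp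
      have hleft : (FreeGroup.of x * v).toWord = (x, true) :: v.toWord := by
        have hmul : FreeGroup.of x * v = FreeGroup.mk ((x, true) :: v.toWord) := by
          conv_lhs => rw [← FreeGroup.mk_toWord (x := v)]
          rw [hofmk, FreeGroup.mul_mk, List.singleton_append]
        rw [hmul]
        apply toWord_mk_of_chain'
        unfold List.Chain'; rw [List.isChain_cons]
        refine ⟨?_, hch⟩
        intro z hz
        rw [hv] at hz
        simp only [List.head?_cons, Option.mem_def, Option.some.injEq] at hz
        subst hz
        rintro ⟨h1, -⟩
        exact hyx h1.symm
      by_cases hlast : v.toWord.getLast hvne = (x, false)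
      · have hdrop : v.toWord.dropLast ++ [(x, false)] = v.toWord := by
          conv_rhs => rw [← List.dropLast_append_getLast hvne]
          rw [hlast]
        have hvmul : v * FreeGroup.of x = FreeGroup.mk v.toWord.dropLast := by
          conv_lhs => rw [← FreeGroup.mk_toWord (x := v)]
          rw [hofmk, FreeGroup.mul_mk]
          conv_lhs => rw [← hdrop]
          rw [List.append_assoc, ← FreeGroup.mul_mk, ← FreeGroup.mul_mk, ← hofmk, ← hinvmk]
          group
        have hL1 : (FreeGroup.of x * v).toWord.length = v.toWord.length + 1 := by
          rw [hleft]; simp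
        have hL2 : (v * FreeGroup.of x).toWord.length ≤ v.toWord.length - 1 := by
          rw [hvmul, FreeGroup.toWord_mk]
          calc (FreeGroup.reduce v.toWord.dropLast).length
              ≤ v.toWord.dropLast.length := FreeGroup.Red.length_le FreeGroup.reduce.red
            _ = v.toWord.length - 1 := by rw [List.length_dropLast]
        rw [hc, hL1] at hL2
        have : 1 ≤ v.toWord.length := by rw [hv]; simp
        omega
      · have hright : (v * FreeGroup.of x).toWord = v.toWord ++ [(x, true)] := by
          have hmul : v * FreeGroup.of x = FreeGroup.mk (v.toWord ++ [(x, true)]) := by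
            conv_lhs => rw [← FreeGroup.mk_toWord (x := v)]
            rw [hofmk, FreeGroup.mul_mk]
          rw [hmul]
          apply toWord_mk_of_chain'
          unfold List.Chain'; rw [List.isChain_append]
          refine ⟨hch, List.isChain_singleton _, ?_⟩
          intro z hz p hp
          rw [List.getLast?_eq_getLast hvne, Option.mem_def, Option.some.injEq] at hz
          simp only [List.head?_cons, Option.mem_def, Option.some.injEq] at hp
          subst hz
          subst hp
          rintro ⟨h1, h2⟩
          exact hlast (Prod.ext h1 (by simpa using h2))
        have hWeq : v.toWord ++ [(x, true)] = (x, true) :: v.toWord := by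
          rw [← hright, hc, hleft]
        rw [hv, List.cons_append] at hWeq
        simp only [List.cons.injEq, Prod.mk.injEq] at hWeq
        exact hyx hWeq.1.1

end RFAux

theorem quotient_by_commutator_relations_free_implies_powers
    (m n : ℕ) (w : Fin m → FreeGroup (Fin 2)) (W : Fin n → FreeGroup (Fin 2))
    (a b : FreeGroup (Fin 2)) (ha : a = FreeGroup.of 0) (hb : b = FreeGroup.of 1)
    (h : Nonempty
      ((FreeGroup (Fin 2) ⧸ Subgroup.normalClosure
          ((Set.range fun i => w i * a * (w i)⁻¹ * a⁻¹) ∪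
            (Set.range fun j => W j * b * (W j)⁻¹ * b⁻¹)))
        ≃* FreeGroup (Fin 2))) :
    (∀ i, w i ∈ Subgroup.zpowers a) ∧ (∀ j, W j ∈ Subgroup.zpowers b) := by
  obtain ⟨e⟩ := h
  set S : Set (FreeGroup (Fin 2)) :=
    (Set.range fun i => w i * a * (w i)⁻¹ * a⁻¹) ∪
      (Set.range fun j => W j * b * (W j)⁻¹ * b⁻¹) with hS
  set Ncl := Subgroup.normalClosure S with hNcl
  let φ : FreeGroup (Fin 2) →* FreeGroup (Fin 2) :=
    e.toMonoidHom.comp (QuotientGroup.mk' Ncl)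
  have hφ : Function.Surjective φ :=
    e.surjective.comp (QuotientGroup.mk'_surjective Ncl)
  have key : ∀ g ∈ Ncl, g = 1 := by
    intro g hg
    refine RFAux.eq_one_of_surjective_map_eq_one φ hφ ?_
    show e ((QuotientGroup.mk' Ncl) g) = 1
    rw [show (QuotientGroup.mk' Ncl) g = 1 from (QuotientGroup.eq_one_iff g).mpr hg]
    exact map_one e
  have comm_of_mem : ∀ u z : FreeGroup (Fin 2), u * z * u⁻¹ * z⁻¹ ∈ Ncl → u * z = z * u := by
    intro u z hmem
    have h1 := key _ hmem
    rw [mul_inv_eq_one] at h1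
    rw [mul_inv_eq_iff_eq_mul] at h1
    exact h1
  constructor
  · intro i
    have hmem : w i * a * (w i)⁻¹ * a⁻¹ ∈ Ncl :=
      Subgroup.subset_normalClosure (Set.mem_union_left _ ⟨i, rfl⟩)
    have hcomm := comm_of_mem _ _ hmem
    rw [ha] at hcomm ⊢
    exact RFAux.mem_zpowers_of_commute 0 (w i).toWord.length (w i) rfl hcomm
  · intro j
    have hmem : W j * b * (W j)⁻¹ * b⁻¹ ∈ Ncl :=
      Subgroup.subset_normalClosure (Set.mem_union_right _ ⟨j, rfl⟩)
    have hcomm := comm_of_mem _ _ hmem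
    rw [hb] at hcomm ⊢
    exact RFAux.mem_zpowers_of_commute 1 (W j).toWord.length (W j) rfl hcomm
end

section
/- Every subgroup of a free group whose abelianization is isomorphic to ℤ is infinite cyclic. -/
open FreeGroup in
/-- The free group on one generator is `Multiplicative ℤ`. -/
noncomputable def freeGroupUnitMulEquivInt : FreeGroup Unit ≃* Multiplicative ℤ := by
  refine MulEquiv.ofBijective (FreeGroup.lift (fun _ => Multiplicative.ofAdd (1 : ℤ))) ?_
  constructor
  · have key : (zpowersHom (FreeGroup Unit) (FreeGroup.of ())).comp
        ((FreeGroup.lift (fun _ => Multiplicative.ofAdd (1 : ℤ))))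
        = MonoidHom.id _ := by
      ext x
      simp
    intro a b hab
    have := congrArg (zpowersHom (FreeGroup Unit) (FreeGroup.of ())) hab
    have ha := congrArg (fun f => f a) key
    have hb := congrArg (fun f => f b) key
    simp only [MonoidHom.comp_apply, MonoidHom.id_apply] at ha hb
    rw [← ha, ← hb]; simpa using this
  · intro z
    refine ⟨FreeGroup.of () ^ (Multiplicative.toAdd z), ?_⟩
    rw [map_zpow, FreeGroup.lift_apply_of, ← ofAdd_zsmul, smul_eq_mul, mul_one, ofAdd_toAdd]

theorem subgroup_of_free_group_with_abelianization_int_is_int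
    (F : Type*) [Group F] [IsFreeGroup F] (H : Subgroup F)
    (h : Nonempty (Abelianization H ≃* Multiplicative ℤ)) :
    Nonempty (H ≃* Multiplicative ℤ) := by
  obtain ⟨e⟩ := h
  -- H is free by Nielsen–Schreier
  have : IsFreeGroup H := inferInstance
  set ι := IsFreeGroup.Generators H with hι
  have eH : H ≃* FreeGroup ι := IsFreeGroup.toFreeGroup H
  -- Abelianization of FreeGroup ι ≃* Multiplicative ℤ
  have eab : Abelianization (FreeGroup ι) ≃* Multiplicative ℤ :=
    (eH.symm.abelianizationCongr).trans e
  -- hence (ι →₀ ℤ) ≃+ ℤ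
  have eadd : (ι →₀ ℤ) ≃+ ℤ :=
    ((FreeAbelianGroup.equivFinsupp ι).symm.trans
      (MulEquiv.toAdditive eab)).trans (AddEquiv.refl _)
  -- compare bases over ℤ
  have elin : (ι →₀ ℤ) ≃ₗ[ℤ] ℤ := eadd.toIntLinearEquiv
  have b1 : Module.Basis ι ℤ (ι →₀ ℤ) := Finsupp.basisSingleOne
  have b2 : Module.Basis PUnit.{1} ℤ (ι →₀ ℤ) := (Module.Basis.singleton PUnit.{1} ℤ).map elin.symm
  have eι : ι ≃ PUnit.{1} := b1.indexEquiv b2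
  exact ⟨eH.trans (((FreeGroup.freeGroupCongr
    (eι.trans (Equiv.punitEquivPUnit.symm.trans (Equiv.refl Unit))))).trans
    freeGroupUnitMulEquivInt)⟩
end

section
/- In the free group on two generators a and b, the normal closure of the single commutator [a,b] = a*b*a⁻¹*b⁻¹ equals the commutator subgroup of the whole group. -/
theorem normal_closure_commutator_eq_commutator_subgroup :
    Subgroup.normalClosure
        {FreeGroup.of 0 * FreeGroup.of 1 * (FreeGroup.of 0)⁻¹ * (FreeGroup.of 1)⁻¹}
      = commutator (FreeGroup (Fin 2)) := by
  set N := Subgroup.normalClosure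
      ({FreeGroup.of 0 * FreeGroup.of 1 * (FreeGroup.of 0)⁻¹ * (FreeGroup.of 1)⁻¹} :
        Set (FreeGroup (Fin 2))) with hN
  have hmem : FreeGroup.of 0 * FreeGroup.of 1 * (FreeGroup.of 0)⁻¹ * (FreeGroup.of 1)⁻¹ ∈ N :=
    Subgroup.subset_normalClosure rfl
  let π : FreeGroup (Fin 2) →* FreeGroup (Fin 2) ⧸ N := QuotientGroup.mk' N
  have hab : Commute (π (FreeGroup.of 0)) (π (FreeGroup.of 1)) := by
    rw [← commutatorElement_eq_one_iff_commute]
    have : π (FreeGroup.of 0 * FreeGroup.of 1 * (FreeGroup.of 0)⁻¹ * (FreeGroup.of 1)⁻¹) = 1 :=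
      (QuotientGroup.eq_one_iff _).mpr hmem
    simpa [commutatorElement_def, map_mul, map_inv] using this
  have hgen : ∀ i j : Fin 2, Commute (π (FreeGroup.of i)) (π (FreeGroup.of j)) := by
    intro i j
    fin_cases i <;> fin_cases j
    · exact Commute.refl _
    · exact hab
    · exact hab.symm
    · exact Commute.refl _
  have key : ∀ g h : FreeGroup (Fin 2), Commute (π g) (π h) := by
    intro g h
    induction g using FreeGroup.induction_on with
    | C1 => simpa using Commute.one_left (π h)
    | of i =>
        induction h using FreeGroup.induction_on with
        | C1 => simpa using Commute.one_right _
        | of j => exact hgen i j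
        | inv_of j hj => simpa [map_inv] using hj.inv_right
        | mul x y hx hy => simpa [map_mul] using hx.mul_right hy
    | inv_of i hi => simpa [map_inv] using hi.inv_left
    | mul x y hx hy => simpa [map_mul] using hx.mul_left hy
  apply le_antisymm
  · apply Subgroup.normalClosure_le_normal
    rintro x hx
    rw [Set.mem_singleton_iff] at hx
    subst hx
    exact Subgroup.commutator_mem_commutator (Subgroup.mem_top _) (Subgroup.mem_top _)
  · rw [commutator_def, Subgroup.commutator_le]
    intro g _ h _
    open scoped commutatorElement in
    have h1 : π ⁅g, h⁆ = 1 := by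
      rw [map_commutatorElement, commutatorElement_eq_one_iff_commute]
      exact key g h
    exact (QuotientGroup.eq_one_iff _).mp h1
end
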